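/- Let y ∈ ℝ^D, let A ∈ ℝ^{D×D} be symmetric, and let S ∈ ℝ^{d×D} be a random matrix whose dD entries are independent Gaussians with mean 0 and variance 1/d. Then E_S[ ⟨(Sy)(Sy)ᵀ, S A Sᵀ⟩ ] = (1 + 1/d)·⟨y yᵀ, A⟩ + (‖y‖₂²/d)·Tr(A). -/

import Mathlib

open Matrix MeasureTheory ProbabilityTheory
open scoped NNReal Kronecker

/-- The spectral (operator) norm of a real square matrix. -/
noncomputable def specNorm {n : Type*} [Fintype n] [DecidableEq n] (A : Matrix n n ℝ) : ℝ :=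
  ‖Matrix.toEuclideanCLM (𝕜 := ℝ) A‖

/-- The Frobenius norm of a real square matrix: `√(Tr(Aᵀ A))`. -/
noncomputable def frobNorm {n : Type*} [Fintype n] (A : Matrix n n ℝ) : ℝ :=
  Real.sqrt ((Aᵀ * A).trace)

/-- The trace inner product `⟨A, B⟩ = Tr(Aᵀ B)` of real square matrices. -/
noncomputable def mInner {n : Type*} [Fintype n] (A B : Matrix n n ℝ) : ℝ :=
  (Aᵀ * B).trace

/-- The Euclidean (ℓ₂) norm of a vector in `ℝⁿ`. -/
noncomputable def l2norm {n : ℕ} (x : Fin n → ℝ) : ℝ := Real.sqrt (∑ i, (x i) ^ 2)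

/-- The sign cube `{-1, 1}ⁿ` as a finite set of vectors in `ℝⁿ`. -/
noncomputable def signs (n : ℕ) : Finset (Fin n → ℝ) :=
  Fintype.piFinset fun _ => ({-1, 1} : Finset ℝ)

/-- The distribution of a `d × D` random matrix with i.i.d. Gaussian entries of
mean `0` and variance `1/d`. -/
noncomputable def gaussMat (d D : ℕ) : Measure (Fin d → Fin D → ℝ) :=
  Measure.pi fun _ => Measure.pi fun _ => gaussianReal 0 (d : ℝ≥0)⁻¹

/-- The nuclear (trace) norm `Tr √(Mᵀ M)` of a real square matrix. -/
noncomputable def nucNorm {n : Type*} [Fintype n] [DecidableEq n] (M : Matrix n n ℝ) : ℝ :=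
  let hA := Matrix.posSemidef_conjTranspose_mul_self M
  ((hA.isHermitian.eigenvectorUnitary : Matrix n n ℝ) *
    diagonal ((RCLike.ofReal : ℝ → ℝ) ∘ Real.sqrt ∘ hA.isHermitian.eigenvalues) *
    star (hA.isHermitian.eigenvectorUnitary : Matrix n n ℝ)).trace

/-- The dual norm of a norm `N` on `ℝᵐ`: `‖y‖* = sup {⟨x, y⟩ : N x ≤ 1}`. -/
noncomputable def dualNorm {m : ℕ} (N : (Fin m → ℝ) → ℝ) (y : Fin m → ℝ) : ℝ :=
  sSup ((fun x => x ⬝ᵥ y) '' {x | N x ≤ 1})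

/-- The binary entropy function (base 2). -/
noncomputable def binH (p : ℝ) : ℝ := -p * Real.logb 2 p - (1 - p) * Real.logb 2 (1 - p)

/-!
Identify the random `d × D` matrix with a standard Gaussian vector of variance `v = 1/d` indexed by
`Fin d × Fin D`. The integrand is then a quartic form in the entries, and for i.i.d. centred
Gaussian coordinates Isserlis' formula `E[xₚ x_q xᵣ xₛ] = v² (δₚ_q δᵣₛ + δₚᵣ δ_qₛ + δₚₛ δ_qᵣ)` holds:
by Fubini the expectation factorises into one-dimensional moments, and only `E x = 0`,
`E x² = v` and `E x⁴ = 3 v²` occur. The three pairings contribute `d ‖y‖² Tr A`, `d² yᵀAy` and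
`d yᵀAy`, which after multiplying by `v² = 1/d²` is the claimed formula.
-/

lemma deriv_mul_exp_mul_sq_div_two (c : ℝ) {P : ℝ → ℝ} {p' t : ℝ} (hP : HasDerivAt P p' t) :
    deriv (fun t => P t * Real.exp (c * t ^ 2 / 2)) t =
      (p' + c * t * P t) * Real.exp (c * t ^ 2 / 2) := by
  have hE : HasDerivAt (fun t : ℝ => c * t ^ 2 / 2) (c * t) t :=
    (((hasDerivAt_pow 2 t).const_mul c).div_const 2).congr_deriv (by ring)
  exact ((hP.mul hE.exp).congr_deriv (by ring)).deriv

-- `E x⁴` is the fourth derivative at `0` of the moment generating function `t ↦ exp (v t² / 2)`.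
lemma integral_pow_four_gaussianReal (v : ℝ≥0) :
    ∫ x, x ^ 4 ∂gaussianReal 0 v = 3 * (v : ℝ) ^ 2 := by
  set c : ℝ := (v : ℝ)
  have d1 : deriv (fun t => Real.exp (c * t ^ 2 / 2)) = fun t => c * t * Real.exp (c * t ^ 2 / 2) :=
    funext fun t => by simpa using deriv_mul_exp_mul_sq_div_two c (hasDerivAt_const t (1 : ℝ))
  have d2 : deriv (fun t => c * t * Real.exp (c * t ^ 2 / 2)) =
      fun t => (c + c ^ 2 * t ^ 2) * Real.exp (c * t ^ 2 / 2) :=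
    funext fun t => by
      rw [deriv_mul_exp_mul_sq_div_two c ((hasDerivAt_id' t).const_mul c)]
      ring
  have d3 : deriv (fun t => (c + c ^ 2 * t ^ 2) * Real.exp (c * t ^ 2 / 2)) =
      fun t => (3 * c ^ 2 * t + c ^ 3 * t ^ 3) * Real.exp (c * t ^ 2 / 2) :=
    funext fun t => by
      rw [deriv_mul_exp_mul_sq_div_two c (((hasDerivAt_pow 2 t).const_mul (c ^ 2)).const_add c)]
      ring
  have d4 : deriv (fun t => (3 * c ^ 2 * t + c ^ 3 * t ^ 3) * Real.exp (c * t ^ 2 / 2)) 0 =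
      3 * c ^ 2 := by
    rw [deriv_mul_exp_mul_sq_div_two c (((hasDerivAt_id' 0).const_mul (3 * c ^ 2)).fun_add
      ((hasDerivAt_pow 3 0).const_mul (c ^ 3)))]
    simp
  have moment := iteratedDeriv_mgf_zero (X := fun x => x) (μ := gaussianReal 0 v) (by simp) 4
  rw [mgf_fun_id_gaussianReal] at moment
  simp only [zero_mul, zero_add] at moment
  rw [iteratedDeriv_succ, iteratedDeriv_succ, iteratedDeriv_succ, iteratedDeriv_one,
    d1, d2, d3, d4] at moment
  exact moment.symm

lemma integral_sq_gaussianReal (v : ℝ≥0) : ∫ x, x ^ 2 ∂gaussianReal 0 v = v := by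
  rw [← variance_fun_id_gaussianReal (μ := 0),
    variance_of_integral_eq_zero aemeasurable_id' integral_id_gaussianReal]

lemma integrable_pow_gaussianReal (μ : ℝ) (v : ℝ≥0) (n : ℕ) :
    Integrable (fun x => x ^ n) (gaussianReal μ v) := by
  have := (memLp_id_gaussianReal (μ := μ) (v := v) n).integrable_norm_pow'
  exact (integrable_norm_iff (by fun_prop)).mp (by simpa only [norm_pow, id_eq] using this)

section Isserlis

variable {ι : Type*} [Fintype ι] [DecidableEq ι] {v : ℝ≥0}

lemma mul_mul_mul_eq_prod_pow (x : ι → ℝ) (p q r s : ι) :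
    x p * x q * x r * x s =
      ∏ k, x k ^ (Pi.single p 1 + Pi.single q 1 + Pi.single r 1 + Pi.single s 1 : ι → ℕ) k := by
  simp only [Pi.add_apply, pow_add, Finset.prod_mul_distrib, Pi.single_apply, pow_ite, pow_one,
    pow_zero, Finset.prod_ite_eq', Finset.mem_univ, if_true]

lemma integrable_mul_mul_mul_pi_gaussianReal (p q r s : ι) :
    Integrable (fun x : ι → ℝ => x p * x q * x r * x s)
      (Measure.pi fun _ => gaussianReal 0 v) := by
  simp only [mul_mul_mul_eq_prod_pow _ p q r s]
  exact Integrable.fintype_prod fun _ => integrable_pow_gaussianReal 0 v _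

theorem integral_mul_mul_mul_pi_gaussianReal (p q r s : ι) :
    ∫ x, x p * x q * x r * x s ∂Measure.pi (fun _ : ι => gaussianReal 0 v) =
      v ^ 2 * ((if p = q then 1 else 0) * (if r = s then 1 else 0) +
        (if p = r then 1 else 0) * (if q = s then 1 else 0) +
        (if p = s then 1 else 0) * (if q = r then 1 else 0)) := by
  simp only [mul_mul_mul_eq_prod_pow _ p q r s]
  rw [integral_fintype_prod_eq_prod (fun k t => t ^ _),
    ← Finset.prod_subset (Finset.subset_univ {p, q, r, s})]
  · by_cases hpq : p = q <;> by_cases hpr : p = r <;> by_cases hps : p = s <;>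
      by_cases hqr : q = r <;> by_cases hqs : q = s <;> by_cases hrs : r = s <;>
      simp_all [Finset.prod_insert, Pi.single_apply, Ne.symm, integral_sq_gaussianReal,
        integral_pow_four_gaussianReal] <;> ring
  · intro k _ hk
    simp only [Finset.mem_insert, Finset.mem_singleton, not_or] at hk
    simp [hk]

theorem integral_quartic_pi_gaussianReal (T : ι → ι → ι → ι → ℝ) :
    ∫ x, ∑ p, ∑ q, ∑ r, ∑ s, T p q r s * (x p * x q * x r * x s)
        ∂Measure.pi (fun _ : ι => gaussianReal 0 v) =
      v ^ 2 * ∑ p, ∑ q, (T p p q q + T p q p q + T p q q p) := by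
  have hmono := integrable_mul_mul_mul_pi_gaussianReal (ι := ι) (v := v)
  simp (disch := first | fun_prop | intros; fun_prop) only [integral_finsetSum,
    integral_const_mul, integral_mul_mul_mul_pi_gaussianReal]
  simp only [mul_add, mul_ite, mul_one, mul_zero, Finset.sum_add_distrib, Finset.sum_ite_irrel,
    ite_self, Finset.sum_const_zero, Finset.sum_ite_eq, Finset.mem_univ, if_true, Finset.mul_sum,
    mul_comm]

end Isserlis

lemma measurePreserving_curry_pi {ι κ X : Type*} [Fintype ι] [Fintype κ] [MeasurableSpace X]
    (μ : Measure X) [IsProbabilityMeasure μ] :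
    MeasurePreserving (MeasurableEquiv.curry ι κ X) (Measure.pi fun _ : ι × κ => μ)
      (Measure.pi fun _ : ι => Measure.pi fun _ : κ => μ) where
  measurable := (MeasurableEquiv.curry ι κ X).measurable
  map_eq := by
    have := Measure.infinitePi_map_curry (ι := ι) (κ := κ) fun _ _ => μ
    simpa only [Measure.infinitePi_eq_pi] using this

lemma mInner_eq_sum {n : Type*} [Fintype n] (X B : Matrix n n ℝ) :
    mInner X B = ∑ i, ∑ j, X i j * B i j := by
  simp only [mInner, trace, diag, mul_apply, transpose_apply]
  exact Finset.sum_comm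

lemma mInner_vecMulVec_mulVec {m n : Type*} [Fintype m] [DecidableEq m] [Fintype n]
    (S : Matrix m n ℝ) (y : n → ℝ) (A : Matrix n n ℝ) :
    mInner (vecMulVec (S *ᵥ y) (S *ᵥ y)) (S * A * Sᵀ) =
      ∑ p : m × n, ∑ q : m × n, ∑ r : m × n, ∑ s : m × n,
        (if p.1 = r.1 ∧ q.1 = s.1 then y p.2 * y q.2 * A r.2 s.2 else 0) *
          (S p.1 p.2 * S q.1 q.2 * S r.1 r.2 * S s.1 s.2) := by
  have hSy : ∀ i, (S *ᵥ y) i = ∑ a, S i a * y a := fun i => rfl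
  have hSAS : ∀ i j, (S * A * Sᵀ) i j = ∑ c, ∑ e, S i c * A c e * S j e := fun i j => by
    simp only [mul_apply, transpose_apply, Finset.sum_mul]
    exact Finset.sum_comm
  simp only [Fintype.sum_prod_type, ite_mul, zero_mul, ite_and, Finset.sum_ite_irrel,
    Finset.sum_const_zero, Finset.sum_ite_eq, Finset.mem_univ, if_true]
  simp only [mInner_eq_sum, hSAS, vecMulVec_apply, hSy, Finset.sum_mul_sum]
  refine Finset.sum_congr rfl fun i _ => Finset.sum_comm.trans <| Finset.sum_congr rfl fun a _ =>
    Finset.sum_congr rfl fun j _ => Finset.sum_comm.trans <| Finset.sum_congr rfl fun b _ =>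
      Finset.sum_congr rfl fun c _ => Finset.sum_congr rfl fun e _ => by ring

theorem sketch_quadratic_form_expectation_general (D d : ℕ) (hd : 0 < d)
    (y : Fin D → ℝ) (A : Matrix (Fin D) (Fin D) ℝ) :
    (∫ s, mInner (vecMulVec (Matrix.of s *ᵥ y) (Matrix.of s *ᵥ y))
        (Matrix.of s * A * (Matrix.of s)ᵀ) ∂gaussMat d D) =
      (1 + 1 / (d : ℝ)) * mInner (vecMulVec y y) A + (l2norm y) ^ 2 / d * A.trace := by
  have hQ : mInner (vecMulVec y y) A = ∑ a, ∑ b, y a * y b * A a b := by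
    simp only [mInner_eq_sum, vecMulVec_apply]
  have hQ_swap : ∑ a, ∑ b, y a * y b * A b a = mInner (vecMulVec y y) A := by
    rw [hQ, Finset.sum_comm]
    exact Finset.sum_congr rfl fun a _ => Finset.sum_congr rfl fun b _ => by ring
  have hy : l2norm y ^ 2 = ∑ a, y a ^ 2 := Real.sq_sqrt (by positivity)
  rw [gaussMat, ← (measurePreserving_curry_pi _).integral_comp']
  simp only [mInner_vecMulVec_mulVec, MeasurableEquiv.coe_curry, of_apply, Function.curry_apply,
    Prod.mk.eta]
  rw [integral_quartic_pi_gaussianReal]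
  simp only [Fintype.sum_prod_type, and_self, ite_and, ite_true, Finset.sum_ite_irrel,
    Finset.sum_const_zero, Finset.sum_ite_eq, Finset.mem_univ, Finset.sum_add_distrib,
    Finset.sum_const, Finset.card_univ, Fintype.card_fin, nsmul_eq_mul, ← Finset.mul_sum]
  rw [← hQ, hQ_swap, hy, trace]
  simp only [diag, ← Finset.sum_mul, sq]
  push_cast
  field_simp
  ring

/-- Sketch expectation (Lemma `sketch-quadratic-form-expectation`, Section 6).  For
`y ∈ ℝ^D`, symmetric `A ∈ ℝ^{D×D}` and a random `d×D` matrix `S` of i.i.d. Gaussians of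
mean `0` and variance `1/d`:
`E_S ⟨(Sy)(Sy)ᵀ, S A Sᵀ⟩ = (1 + 1/d) ⟨y yᵀ, A⟩ + (‖y‖₂²/d) Tr A`. -/
theorem sketch_quadratic_form_expectation (D d : ℕ) (hd : 0 < d)
    (y : Fin D → ℝ) (A : Matrix (Fin D) (Fin D) ℝ) (hA : A.IsSymm) :
    (∫ s, mInner (vecMulVec (Matrix.of s *ᵥ y) (Matrix.of s *ᵥ y))
        (Matrix.of s * A * (Matrix.of s)ᵀ) ∂gaussMat d D) =
      (1 + 1 / (d : ℝ)) * mInner (vecMulVec y y) A + (l2norm y) ^ 2 / d * A.trace :=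
  sketch_quadratic_form_expectation_general D d hd y A
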